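/- Every fractional pebbling of the complete binary tree of height 3 requires at least 2.5 pebbles. -/

import Mathlib

/-! ## Fractional black-white pebbling -/

/-- A fractional pebble configuration: black and white pebble values on each node. -/
structure FConfig (V : Type) where
  b : V → ℝ
  w : V → ℝ

namespace FConfig

/-- Validity: all values nonnegative, total value of each node at most 1. -/
def Valid {V : Type} (C : FConfig V) : Prop :=
  ∀ v, 0 ≤ C.b v ∧ 0 ≤ C.w v ∧ C.b v + C.w v ≤ 1

/-- Total pebble weight of a configuration. -/
noncomputable def weight {V : Type} [Fintype V] (C : FConfig V) : ℝ :=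
  ∑ v, (C.b v + C.w v)

/-- The empty configuration. -/
def zero (V : Type) : FConfig V := ⟨fun _ => 0, fun _ => 0⟩

/-- A whole (non-fractional) configuration: all values 0 or 1. -/
def Whole {V : Type} (C : FConfig V) : Prop :=
  ∀ v, (C.b v = 0 ∨ C.b v = 1) ∧ (C.w v = 0 ∨ C.w v = 1)

/-- A black configuration: whole, and with no white pebbles. -/
def BlackOnly {V : Type} (C : FConfig V) : Prop :=
  C.Whole ∧ ∀ v, C.w v = 0

end FConfig

/-- One legal move of the fractional black-white pebble game (no white sliding):
(i) decrease a black value; (ii) increase a white value; (iii) if every child of `v`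
has total pebble value 1, decrease `w v` to 0 and/or increase `b v` arbitrarily while
simultaneously decreasing the black values of the children of `v` arbitrarily.
Here `child c v` means `c` is a child of `v`. -/
def FMove {V : Type} (child : V → V → Prop) (C C' : FConfig V) : Prop :=
  (∃ v, C'.b v ≤ C.b v ∧ C'.w v = C.w v ∧
     ∀ u, u ≠ v → C'.b u = C.b u ∧ C'.w u = C.w u) ∨
  (∃ v, C'.b v = C.b v ∧ C.w v ≤ C'.w v ∧
     ∀ u, u ≠ v → C'.b u = C.b u ∧ C'.w u = C.w u) ∨
  (∃ v, (∀ c, child c v → C.b c + C.w c = 1) ∧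
     C.b v ≤ C'.b v ∧ (C'.w v = 0 ∨ C'.w v = C.w v) ∧
     (∀ c, child c v → C'.b c ≤ C.b c ∧ C'.w c = C.w c) ∧
     (∀ u, u ≠ v → ¬ child u v → C'.b u = C.b u ∧ C'.w u = C.w u))

/-- The additional white sliding move: if `w v = 1`, `j` is a child of `v`, and every
child of `v` other than `j` has total pebble value 1, then set `w v = 0` and increase
`w j` so that `j` gets total pebble value 1. -/
def WhiteSlide {V : Type} (child : V → V → Prop) (C C' : FConfig V) : Prop :=
  ∃ v j, child j v ∧ j ≠ v ∧ C.w v = 1 ∧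
    (∀ c, child c v → c ≠ j → C.b c + C.w c = 1) ∧
    C'.w v = 0 ∧ C'.b v = C.b v ∧
    C'.b j = C.b j ∧ C.w j ≤ C'.w j ∧ C'.b j + C'.w j = 1 ∧
    (∀ u, u ≠ v → u ≠ j → C'.b u = C.b u ∧ C'.w u = C.w u)

/-- A pebbling of cost at most `p`, with moves given by `move`, all configurations
satisfying the extra constraint `Extra`, starting and ending with the empty
configuration and achieving `Goal` (a property of the whole sequence together with
its length). -/
def PebblingLE {V : Type} [Fintype V] (move : FConfig V → FConfig V → Prop)
    (Extra : FConfig V → Prop) (Goal : (ℕ → FConfig V) → ℕ → Prop) (p : ℝ) : Prop :=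
  ∃ (n : ℕ) (C : ℕ → FConfig V),
    C 0 = FConfig.zero V ∧ C n = FConfig.zero V ∧
    (∀ t ≤ n, (C t).Valid) ∧
    (∀ t ≤ n, Extra (C t)) ∧
    (∀ t < n, move (C t) (C (t + 1))) ∧
    Goal C n ∧
    (∀ t ≤ n, (C t).weight ≤ p)

/-! ## The complete `d`-ary tree of height `h` (with `h` levels) -/

/-- Nodes of the complete `d`-ary tree with `h` levels: a level `l < h`
together with an index among the `d ^ l` nodes of that level. -/
abbrev TNode (d h : ℕ) := Σ l : Fin h, Fin (d ^ (l : ℕ))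

/-- `c` is a child of `v` in the complete `d`-ary tree. -/
def IsChild (d h : ℕ) (c v : TNode d h) : Prop :=
  (c.1 : ℕ) = (v.1 : ℕ) + 1 ∧ ∃ j : Fin d, (c.2 : ℕ) = d * (v.2 : ℕ) + (j : ℕ)

/-- The root of the tree. -/
def troot (d h : ℕ) (hh : 0 < h) : TNode d h :=
  ⟨⟨0, hh⟩, ⟨0, by simp⟩⟩

/-- The tree `T_d^h` has a black pebbling of cost at most `p`. -/
def BlackPebbles (d h : ℕ) (hh : 0 < h) (p : ℝ) : Prop :=
  PebblingLE (FMove (IsChild d h)) FConfig.BlackOnly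
    (fun C n => ∃ t ≤ n, (C t).b (troot d h hh) = 1) p

/-- The tree `T_d^h` has a whole black-white pebbling (no white sliding)
of cost at most `p`. -/
def BWPebbles (d h : ℕ) (hh : 0 < h) (p : ℝ) : Prop :=
  PebblingLE (FMove (IsChild d h)) FConfig.Whole
    (fun C n => ∃ t ≤ n, (C t).b (troot d h hh) = 1) p

/-- The tree `T_d^h` has a fractional pebbling of cost at most `p`. -/
def FRPebbles (d h : ℕ) (hh : 0 < h) (p : ℝ) : Prop :=
  PebblingLE (FMove (IsChild d h)) (fun _ => True)
    (fun C n => ∃ t ≤ n, (C t).b (troot d h hh) = 1) p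

/-- Fractional pebbling of `T_d^h` where white sliding moves are also permitted. -/
def FRPebblesWS (d h : ℕ) (hh : 0 < h) (p : ℝ) : Prop :=
  PebblingLE (fun C C' => FMove (IsChild d h) C C' ∨ WhiteSlide (IsChild d h) C C')
    (fun _ => True)
    (fun C n => ∃ t ≤ n, (C t).b (troot d h hh) = 1) p

/-! The root becomes black at some step `s`, so both its children are full then. If a child
`x` carries white value at least `1/2`, that white pebble must be removed later, and at its
removal the two leaves below `x` are full: cost `2 + 1/2`. Otherwise both children carry black
value at least `1/2` at step `s`. Consider, for each child, the last step before `s` at which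
its black value rises through `1/2`; at the later of the two, the leaves below that child are
full while the other child still holds black value at least `1/2`. -/

theorem Nat.exists_mem_Ico_not_and_forall_Ioc {P : ℕ → Prop} {a b : ℕ} (hab : a ≤ b)
    (ha : ¬P a) (hb : P b) : ∃ t ∈ Set.Ico a b, ¬P t ∧ ∀ t' ∈ Set.Ioc t b, P t' := by
  induction b, hab using Nat.le_induction with
  | base => exact absurd hb ha
  | succ b hab ih =>
    by_cases hPb : P b
    · obtain ⟨t, ⟨hat, htb⟩, hPt, hafter⟩ := ih hPb
      refine ⟨t, ⟨hat, htb.trans b.lt_succ_self⟩, hPt, fun t' ⟨htt', ht'b⟩ => ?_⟩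
      rcases Nat.lt_or_eq_of_le ht'b with ht'b | rfl
      · exact hafter t' ⟨htt', Nat.lt_succ_iff.mp ht'b⟩
      · exact hb
    · exact ⟨b, ⟨hab, b.lt_succ_self⟩, hPb, fun t' ⟨hbt', ht'b⟩ => by
        rwa [le_antisymm ht'b hbt']⟩

namespace FMove

variable {V : Type} {child : V → V → Prop} {C C' : FConfig V} {v : V}

theorem children_full_of_b_lt (h : FMove child C C') (hv : C.b v < C'.b v) :
    ∀ c, child c v → C.b c + C.w c = 1 := by
  rcases h with ⟨v₀, hb, -, hother⟩ | ⟨v₀, hb, -, hother⟩ | ⟨v₀, hfull, -, -, hchild, hother⟩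
  · rcases eq_or_ne v v₀ with rfl | hne
    · exact absurd hv hb.not_gt
    · exact absurd hv ((hother v hne).1.symm ▸ lt_irrefl _)
  · rcases eq_or_ne v v₀ with rfl | hne
    · exact absurd hv (hb ▸ lt_irrefl _)
    · exact absurd hv ((hother v hne).1.symm ▸ lt_irrefl _)
  · rcases eq_or_ne v v₀ with rfl | hne
    · exact hfull
    · by_cases hc : child v v₀
      · exact absurd hv (hchild v hc).1.not_gt
      · exact absurd hv ((hother v hne hc).1.symm ▸ lt_irrefl _)

theorem children_full_of_w_lt (h : FMove child C C') (hv : C'.w v < C.w v) :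
    ∀ c, child c v → C.b c + C.w c = 1 := by
  rcases h with ⟨v₀, -, hw, hother⟩ | ⟨v₀, -, hw, hother⟩ | ⟨v₀, hfull, -, -, hchild, hother⟩
  · rcases eq_or_ne v v₀ with rfl | hne
    · exact absurd hv (hw ▸ lt_irrefl _)
    · exact absurd hv ((hother v hne).2 ▸ lt_irrefl _)
  · rcases eq_or_ne v v₀ with rfl | hne
    · exact absurd hv hw.not_gt
    · exact absurd hv ((hother v hne).2 ▸ lt_irrefl _)
  · rcases eq_or_ne v v₀ with rfl | hne
    · exact hfull
    · by_cases hc : child v v₀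
      · exact absurd hv ((hchild v hc).2 ▸ lt_irrefl _)
      · exact absurd hv ((hother v hne hc).2 ▸ lt_irrefl _)

end FMove

theorem FConfig.Valid.two_add_le_weight {V : Type} [Fintype V] {C : FConfig V} (hC : C.Valid)
    {c₁ c₂ o : V} (h₁₂ : c₁ ≠ c₂) (h₁o : c₁ ≠ o) (h₂o : c₂ ≠ o)
    (hc₁ : C.b c₁ + C.w c₁ = 1) (hc₂ : C.b c₂ + C.w c₂ = 1) :
    2 + (C.b o + C.w o) ≤ C.weight := by
  classical
  have hsub : ∑ v ∈ {c₁, c₂, o}, (C.b v + C.w v) ≤ C.weight :=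
    Finset.sum_le_sum_of_subset_of_nonneg (Finset.subset_univ _)
      fun v _ _ => add_nonneg (hC v).1 (hC v).2.1
  rw [Finset.sum_insert (by simp [h₁₂, h₁o]), Finset.sum_insert (by simp [h₂o]),
    Finset.sum_singleton] at hsub
  linarith

theorem exists_lt_succ_and_forall_Ioc_le {f : ℕ → ℝ} {s : ℕ} {θ : ℝ} (h₀ : f 0 < θ)
    (hs : θ ≤ f s) : ∃ u < s, f u < f (u + 1) ∧ ∀ t ∈ Set.Ioc u s, θ ≤ f t := by
  obtain ⟨u, ⟨-, hus⟩, hlow, hafter⟩ :=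
    Nat.exists_mem_Ico_not_and_forall_Ioc (P := fun t => θ ≤ f t) s.zero_le h₀.not_ge hs
  exact ⟨u, hus, (not_le.mp hlow).trans_le (hafter (u + 1) ⟨u.lt_succ_self, hus⟩), hafter⟩

section Pebbling

variable {V : Type} [Fintype V] {child : V → V → Prop} {n : ℕ} {C : ℕ → FConfig V} {p : ℝ}

theorem five_halves_le_of_white_half (hval : ∀ t ≤ n, (C t).Valid)
    (hmove : ∀ t < n, FMove child (C t) (C (t + 1))) (hwt : ∀ t ≤ n, (C t).weight ≤ p)
    {v c₁ c₂ : V} (hc₁ : child c₁ v) (hc₂ : child c₂ v) (h₁₂ : c₁ ≠ c₂) (h₁v : c₁ ≠ v)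
    (h₂v : c₂ ≠ v) {s : ℕ} (hsn : s ≤ n) (hs : 1 / 2 ≤ (C s).w v) (hn : (C n).w v = 0) :
    5 / 2 ≤ p := by
  obtain ⟨u, ⟨-, hun⟩, hhigh, hafter⟩ := Nat.exists_mem_Ico_not_and_forall_Ioc
    (P := fun t => (C t).w v < 1 / 2) hsn (not_lt.mpr hs) (by simp [hn])
  have hdrop : (C (u + 1)).w v < (C u).w v :=
    (hafter (u + 1) ⟨u.lt_succ_self, hun⟩).trans_le (not_lt.mp hhigh)
  have hfull := (hmove u hun).children_full_of_w_lt hdrop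
  have hweight := (hval u hun.le).two_add_le_weight h₁₂ h₁v h₂v (hfull c₁ hc₁) (hfull c₂ hc₂)
  linarith [(hval u hun.le v).1, not_lt.mp hhigh, hwt u hun.le]

/-- If `u' = u`, the full child `c'` of `v'` takes the place of `v'`. -/
theorem five_halves_le_of_b_rises (hval : ∀ t ≤ n, (C t).Valid)
    (hmove : ∀ t < n, FMove child (C t) (C (t + 1))) (hwt : ∀ t ≤ n, (C t).weight ≤ p)
    {v v' c₁ c₂ c' : V} (hc₁ : child c₁ v) (hc₂ : child c₂ v) (hc' : child c' v')
    (h₁₂ : c₁ ≠ c₂) (h₁v' : c₁ ≠ v') (h₂v' : c₂ ≠ v') (h₁c' : c₁ ≠ c') (h₂c' : c₂ ≠ c')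
    {u u' s : ℕ} (hu'u : u' ≤ u) (hus : u < s) (hsn : s ≤ n)
    (hrise : (C u).b v < (C (u + 1)).b v) (hrise' : (C u').b v' < (C (u' + 1)).b v')
    (hafter' : ∀ t ∈ Set.Ioc u' s, 1 / 2 ≤ (C t).b v') :
    5 / 2 ≤ p := by
  have hun : u ≤ n := (hus.trans_le hsn).le
  have hfull := (hmove u (hus.trans_le hsn)).children_full_of_b_lt hrise
  have hbound := hwt u hun
  rcases hu'u.lt_or_eq with hlt | rfl
  · have hweight := (hval u hun).two_add_le_weight h₁₂ h₁v' h₂v' (hfull c₁ hc₁) (hfull c₂ hc₂)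
    linarith [(hval u hun v').2.1, hafter' u ⟨hlt, hus.le⟩]
  · have hfull' := (hmove u' (hus.trans_le hsn)).children_full_of_b_lt hrise' c' hc'
    have hweight := (hval u' hun).two_add_le_weight h₁₂ h₁c' h₂c' (hfull c₁ hc₁) (hfull c₂ hc₂)
    linarith

end Pebbling

theorem frPebbles_h3_lower :
    ∀ p : ℝ, FRPebbles 2 3 (by omega) p → (5 / 2 : ℝ) ≤ p := by
  rintro p ⟨n, C, h₀, hn, hval, -, hmove, ⟨t, htn, hroot⟩, hwt⟩
  let x : TNode 2 3 := ⟨1, 0⟩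
  let y : TNode 2 3 := ⟨1, 1⟩
  have hx : IsChild 2 3 x (troot 2 3 (by omega)) := ⟨rfl, 0, rfl⟩
  have hy : IsChild 2 3 y (troot 2 3 (by omega)) := ⟨rfl, 1, rfl⟩
  have hx₀ : IsChild 2 3 ⟨2, 0⟩ x := ⟨rfl, 0, rfl⟩
  have hx₁ : IsChild 2 3 ⟨2, 1⟩ x := ⟨rfl, 1, rfl⟩
  have hy₀ : IsChild 2 3 ⟨2, 2⟩ y := ⟨rfl, 0, rfl⟩
  have hy₁ : IsChild 2 3 ⟨2, 3⟩ y := ⟨rfl, 1, rfl⟩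
  obtain ⟨s, hst, hrise, -⟩ := exists_lt_succ_and_forall_Ioc_le
    (f := fun t => (C t).b (troot 2 3 (by omega))) (by simp [h₀, FConfig.zero]) hroot.ge
  have hsn : s ≤ n := (hst.trans_le htn).le
  have hfull := (hmove s (hst.trans_le htn)).children_full_of_b_lt hrise
  by_cases hwx : 1 / 2 ≤ (C s).w x
  · exact five_halves_le_of_white_half hval hmove hwt hx₀ hx₁ (by decide) (by decide)
      (by decide) hsn hwx (by rw [hn]; rfl)
  by_cases hwy : 1 / 2 ≤ (C s).w y
  · exact five_halves_le_of_white_half hval hmove hwt hy₀ hy₁ (by decide) (by decide)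
      (by decide) hsn hwy (by rw [hn]; rfl)
  have hbx : 1 / 2 ≤ (C s).b x := by linarith [hfull x hx]
  have hby : 1 / 2 ≤ (C s).b y := by linarith [hfull y hy]
  obtain ⟨ux, hux, hrisex, hafterx⟩ := exists_lt_succ_and_forall_Ioc_le
    (f := fun t => (C t).b x) (by simp [h₀, FConfig.zero]) hbx
  obtain ⟨uy, huy, hrisey, haftery⟩ := exists_lt_succ_and_forall_Ioc_le
    (f := fun t => (C t).b y) (by simp [h₀, FConfig.zero]) hby
  rcases le_total uy ux with h | h
  · exact five_halves_le_of_b_rises hval hmove hwt hx₀ hx₁ hy₀ (by decide) (by decide)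
      (by decide) (by decide) (by decide) h hux hsn hrisex hrisey haftery
  · exact five_halves_le_of_b_rises hval hmove hwt hy₀ hy₁ hx₀ (by decide) (by decide)
      (by decide) (by decide) (by decide) h huy hsn hrisey hrisex hafterx
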